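/- Let (f^* : A ⥤ B, g^* : C ⥤ D, h : A ⥤ C, k : B ⥤ D) together with right adjoints f_* of f^* and g_* of g^* and a natural isomorphism α : k ∘ f^* ≅ g^* ∘ h form a horizontally right adjointable square. Assume moreover that h preserves all small limits and that every object of A is the limit of some small diagram all of whose values lie in the essential image of f_*. If f^* X is k-colocal for an object X of A, then X is h-colocal. -/

import Mathlib

/-!
For `b : B`, the adjunctions, the isomorphism `α` and the invertible mate identify the action of
`h` on `Hom(X, f_* b)` with the action of `k` on `Hom(f^* X, b)`, which is bijective by
hypothesis. The targets `Y` on which `h` acts bijectively on `Hom(X, Y)` are closed under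
isomorphisms and, as `h` preserves limits, under small limits; since every object is a small
limit of objects of the essential image of `f_*`, they exhaust `A`.
-/

open CategoryTheory CategoryTheory.Limits

universe w v₂ v₃ v₄ u₁ u₂ u₃ u₄

def Colocal {C : Type u₁} {D : Type u₂} [Category.{v₁} C] [Category.{v₂} D]
    (F : C ⥤ D) (X : C) : Prop :=
  ∀ Y : C, Function.Bijective (fun f : X ⟶ Y => F.map f)

namespace CategoryTheory.Functor

variable {A : Type*} {C : Type*} [Category* A] [Category* C]

def bijectiveOnHomsFrom (F : A ⥤ C) (X : A) : ObjectProperty A :=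
  fun Y => Function.Bijective (fun f : X ⟶ Y => F.map f)

variable (F : A ⥤ C) (X : A)

instance : (F.bijectiveOnHomsFrom X).IsClosedUnderIsomorphisms where
  of_iso {Y Y'} e hY := by
    have hcomp : (fun f : X ⟶ Y' => F.map f) =
        (F.mapIso e).homToEquiv ∘ (fun f : X ⟶ Y => F.map f) ∘ e.symm.homToEquiv := by
      funext f
      simp only [Function.comp_apply, Iso.homToEquiv_apply, Iso.symm_hom, Functor.mapIso_hom,
        ← F.map_comp, Category.assoc, e.inv_hom_id, Category.comp_id]
    rw [bijectiveOnHomsFrom, hcomp]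
    exact (Equiv.bijective _).comp (hY.comp (Equiv.bijective _))

lemma bijectiveOnHomsFrom_of_isLimit {J : Type*} [Category* J] {W : J ⥤ A} {c : Cone W}
    (hc : IsLimit c) (hFc : IsLimit (F.mapCone c)) (hW : ∀ j, F.bijectiveOnHomsFrom X (W.obj j)) :
    F.bijectiveOnHomsFrom X c.pt := by
  let e j := Equiv.ofBijective _ (hW j)
  have map_e_symm j (ψ : F.obj X ⟶ F.obj (W.obj j)) : F.map ((e j).symm ψ) = ψ :=
    (e j).apply_symm_apply ψ
  refine ⟨fun f g hfg => hc.hom_ext fun j => (hW j).injective ?_, fun φ => ?_⟩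
  · simp only [Functor.map_comp, hfg]
  let s : Cone W :=
    { pt := X
      π := { app := fun j => (e j).symm (φ ≫ F.map (c.π.app j))
             naturality := fun j j' m => (hW j').injective <| by
               simp only [Functor.const_obj_obj, Functor.const_obj_map, Category.id_comp,
                 F.map_comp, map_e_symm, Category.assoc, ← c.w m] } }
  refine ⟨hc.lift s, hFc.hom_ext fun j => ?_⟩
  simp only [Functor.mapCone_pt, Functor.mapCone_π_app, ← F.map_comp, hc.fac]
  exact map_e_symm j _

instance {J : Type*} [Category* J] [PreservesLimitsOfShape J F] :
    (F.bijectiveOnHomsFrom X).IsClosedUnderLimitsOfShape J where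
  limitsOfShape_le Y := by
    rintro ⟨p⟩
    exact F.bijectiveOnHomsFrom_of_isLimit X p.isLimit (isLimitOfPreserves F p.isLimit)
      p.prop_diag_obj

end CategoryTheory.Functor

namespace CategoryTheory

variable {A B C D : Type*} [Category* A] [Category* B] [Category* C] [Category* D]
  {L₁ : A ⥤ B} {R₁ : B ⥤ A} {L₂ : C ⥤ D} {R₂ : D ⥤ C} (adj₁ : L₁ ⊣ R₁) (adj₂ : L₂ ⊣ R₂)
  {G : A ⥤ C} {H : B ⥤ D} (β : TwoSquare G L₁ L₂ H)

lemma map_comp_mateEquiv_app {X : A} {b : B} (f : X ⟶ R₁.obj b) :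
    G.map f ≫ (mateEquiv adj₁ adj₂ β).app b =
      adj₂.homEquiv _ _ (β.app X ≫ H.map ((adj₁.homEquiv X b).symm f)) := by
  obtain ⟨f, rfl⟩ := (adj₁.homEquiv X b).surjective f
  have naturality := (mateEquiv adj₁ adj₂ β).naturality f
  simp only [Functor.comp_map] at naturality
  rw [Equiv.symm_apply_apply, adj₁.homEquiv_unit, adj₂.homEquiv_unit, G.map_comp,
    Category.assoc, naturality, reassoc_of% unit_mateEquiv adj₁ adj₂ β X, R₂.map_comp]

lemma bijectiveOnHomsFrom_obj_of_isIso_mateEquiv_app {X : A} {b : B} [IsIso (β.app X)]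
    [IsIso ((mateEquiv adj₁ adj₂ β).app b)] (hX : H.bijectiveOnHomsFrom (L₁.obj X) b) :
    G.bijectiveOnHomsFrom X (R₁.obj b) := by
  have hcomp : (fun f : X ⟶ R₁.obj b => G.map f) =
      (asIso ((mateEquiv adj₁ adj₂ β).app b)).symm.homToEquiv ∘ adj₂.homEquiv _ _ ∘
        (asIso (β.app X)).symm.homFromEquiv ∘ (fun g : L₁.obj X ⟶ b => H.map g) ∘
          (adj₁.homEquiv X b).symm := by
    funext f
    simp only [Function.comp_apply, Iso.homFromEquiv_apply, Iso.homToEquiv_apply, Iso.symm_inv,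
      Iso.symm_hom, asIso_hom, asIso_inv, ← map_comp_mateEquiv_app, Category.assoc,
      IsIso.hom_inv_id, Category.comp_id]
  rw [Functor.bijectiveOnHomsFrom, hcomp]
  exact (Equiv.bijective _).comp <| (Equiv.bijective _).comp <| (Equiv.bijective _).comp <|
    hX.comp (Equiv.bijective _)

end CategoryTheory

theorem stmt7 {A : Type u₁} {B : Type u₂} {C : Type u₃} {D : Type u₄}
    [Category.{w} A] [Category.{v₂} B] [Category.{v₃} C] [Category.{v₄} D]
    (fstar : A ⥤ B) (fpush : B ⥤ A) (adjf : fstar ⊣ fpush)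
    (gstar : C ⥤ D) (gpush : D ⥤ C) (adjg : gstar ⊣ gpush)
    (h : A ⥤ C) (k : B ⥤ D) (α : fstar ⋙ k ≅ h ⋙ gstar)
    (hmate : IsIso (mateEquiv adjf adjg α.inv))
    [PreservesLimitsOfSize.{w, w} h]
    (hcover : ∀ a : A, ∃ (J : Cat.{w, w}) (W : J ⥤ A) (c : Cone W),
      (∀ j : J, fpush.essImage (W.obj j)) ∧ Nonempty (IsLimit c) ∧ Nonempty (c.pt ≅ a))
    (X : A) (hX : Colocal k (fstar.obj X)) :
    Colocal h X := by
  have hmate_app (b : B) : IsIso ((mateEquiv adjf adjg α.inv).app b) :=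
    NatIso.isIso_app_of_isIso _ b
  have essImage_le : fpush.essImage ≤ h.bijectiveOnHomsFrom X := by
    rintro Y ⟨b, ⟨e⟩⟩
    exact (h.bijectiveOnHomsFrom X).prop_of_iso e
      (bijectiveOnHomsFrom_obj_of_isIso_mateEquiv_app adjf adjg α.inv (hX b))
  intro Y
  obtain ⟨J, W, c, hW, ⟨hc⟩, ⟨e⟩⟩ := hcover Y
  exact (h.bijectiveOnHomsFrom X).prop_of_iso e
    ((h.bijectiveOnHomsFrom X).prop_of_isLimit hc fun j => essImage_le _ (hW j))
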